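/- arXiv:2507.15313 — 2 statements merged into one kernel-verified Lean document; each statement's English description precedes it below -/
import Mathlib

section
/- If w = uv is a c-epichristoffel word obtained as w = φ(a_{i_l} a_j) where φ is a composition of standard episturmian morphisms, u = φ(a_{i_l}) and v = φ(a_j), then the word uuv is also a c-epichristoffel word. -/
/-- The standard episturmian morphism `ψ_a`: `ψ_a(a) = a`, `ψ_a(b) = a b` for `b ≠ a`,
acting on words (lists). -/
def psi {α : Type*} [DecidableEq α] (a : α) (w : List α) : List α :=
  w.flatMap (fun b => if b = a then [a] else [a, b])

/-- The morphism `ψ̄_a`: `ψ̄_a(a) = a`, `ψ̄_a(b) = b a` for `b ≠ a`. -/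
def psiBar {α : Type*} [DecidableEq α] (a : α) (w : List α) : List α :=
  w.flatMap (fun b => if b = a then [a] else [b, a])

/-- Composition `ψ_{a₁} ∘ ψ_{a₂} ∘ ⋯ ∘ ψ_{aₗ}` of standard episturmian morphisms,
indexed by the list `[a₁, a₂, …, aₗ]`, applied to a word. -/
def psiComp {α : Type*} [DecidableEq α] (s : List α) (w : List α) : List α :=
  s.foldr psi w

/-- The monoid of episturmian morphisms: generated by the `ψ_a`, the `ψ̄_a`
and letter permutations, under composition. -/
inductive IsEpisturmian {α : Type*} [DecidableEq α] : (List α → List α) → Prop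
  | id : IsEpisturmian id
  | psi (a : α) (f : List α → List α) : IsEpisturmian f → IsEpisturmian (psi a ∘ f)
  | psiBar (a : α) (f : List α → List α) : IsEpisturmian f → IsEpisturmian (psiBar a ∘ f)
  | perm (σ : Equiv.Perm α) (f : List α → List α) :
      IsEpisturmian f → IsEpisturmian ((List.map σ) ∘ f)

/-- A word is c-epichristoffel if it is the image of a letter by an episturmian morphism. -/
def CEpichristoffel {α : Type*} [DecidableEq α] (w : List α) : Prop :=
  ∃ (f : List α → List α) (a : α), IsEpisturmian f ∧ w = f [a]




lemma psi_append {α : Type*} [DecidableEq α] (a : α) (x y : List α) :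
    psi a (x ++ y) = psi a x ++ psi a y := by
  simp [psi]

lemma psiComp_append {α : Type*} [DecidableEq α] (s : List α) (x y : List α) :
    psiComp s (x ++ y) = psiComp s x ++ psiComp s y := by
  induction s with
  | nil => rfl
  | cons a t ih => simp [psiComp, List.foldr_cons] at ih ⊢; rw [ih, psi_append]

lemma isEpisturmian_psiComp_comp {α : Type*} [DecidableEq α] (s : List α)
    (g : List α → List α) (hg : IsEpisturmian g) :
    IsEpisturmian (fun w => psiComp s (g w)) := by
  induction s with
  | nil => exact hg
  | cons a t ih => exact IsEpisturmian.psi a _ ih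

/-- If `w = uv` is a c-epichristoffel word obtained as `w = φ(cd)` where
`φ = ψ_{a₁} ∘ ⋯ ∘ ψ_{aₗ₋₁}` is a composition of standard episturmian morphisms
(indexed by the list `s`), `u = φ(c)` and `v = φ(d)` with `c ≠ d`,
then `u u v` is also a c-epichristoffel word. -/
theorem cEpichristoffel_uuv {α : Type*} [DecidableEq α] (s : List α) (c d : α)
    (hcd : c ≠ d) (u v w : List α)
    (hu : u = psiComp s [c]) (hv : v = psiComp s [d])
    (hw : w = u ++ v) (hwe : w = psiComp s [c, d]) (hepi : CEpichristoffel w) :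
    CEpichristoffel (u ++ u ++ v) := by
  refine ⟨fun x => psiComp s (psi c (psi c x)), d,
    isEpisturmian_psiComp_comp s _ (IsEpisturmian.psi c _ (IsEpisturmian.psi c _ IsEpisturmian.id)), ?_⟩
  have h1 : psi c (psi c [d]) = [c] ++ [c] ++ [d] := by
    simp [psi, hcd.symm]
  simp only []
  rw [h1, psiComp_append, psiComp_append, hu, hv]
end

section
/- If a/b is the k-th entry from the right of the n-th row of the Stern–Brocot tree with n > 1, then the k-th entry from the right of the (n+1)-th row is (a+b)/b. -/
/-- Formal fractions are pairs `(numerator, denominator)`; the mediant of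
`a/b` and `c/d` is `(a+c)/(b+d)`, i.e. componentwise addition. -/
def insertMediants : List (ℕ × ℕ) → List (ℕ × ℕ)
  | [] => []
  | [x] => [x]
  | x :: y :: t => x :: (x.1 + y.1, x.2 + y.2) :: insertMediants (y :: t)

/-- The Stern–Brocot sequence: `S 0 = (0/1, 1/0)` and `S (n+1)` is obtained from
`S n` by inserting mediants between consecutive fractions. -/
def sbSeq : ℕ → List (ℕ × ℕ)
  | 0 => [(0, 1), (1, 0)]
  | n + 1 => insertMediants (sbSeq n)

/-- The entries at odd indices of a list (the newly inserted mediants). -/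
def oddEntries : List (ℕ × ℕ) → List (ℕ × ℕ)
  | [] => []
  | [_] => []
  | _ :: y :: t => y :: oddEntries t

/-- The `n`-th row of the Stern–Brocot tree: the mediants newly inserted at
the `n`-th step, in left-to-right order. -/
def sbRow (n : ℕ) : List (ℕ × ℕ) :=
  oddEntries (sbSeq n)

private def sbF (p : ℕ × ℕ) : ℕ × ℕ := (p.1 + p.2, p.2)

private lemma insertMediants_map : ∀ l : List (ℕ × ℕ),
    insertMediants (l.map sbF) = (insertMediants l).map sbF
  | [] => rfl
  | [x] => rfl
  | x :: y :: t => by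
    have ih := insertMediants_map (y :: t)
    simp only [List.map_cons, sbF] at ih
    simp only [List.map_cons, insertMediants, sbF, ih, List.cons.injEq, Prod.mk.injEq]
    exact ⟨trivial, ⟨by omega, trivial⟩, trivial⟩

private lemma insertMediants_append : ∀ (A : List (ℕ × ℕ)) (b : ℕ × ℕ) (B : List (ℕ × ℕ)),
    insertMediants (A ++ b :: B)
      = (insertMediants (A ++ [b])).dropLast ++ insertMediants (b :: B)
  | [], b, B => by simp [insertMediants]
  | [a], b, B => by
    cases B with
    | nil => simp [insertMediants]
    | cons c C => simp [insertMediants]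
  | a :: a' :: A', b, B => by
    have ih := insertMediants_append (a' :: A') b B
    have hne : insertMediants ((a' :: A') ++ [b]) ≠ [] := by
      cases A' <;> simp [insertMediants]
    calc insertMediants ((a :: a' :: A') ++ b :: B)
        = a :: (a.1 + a'.1, a.2 + a'.2) :: insertMediants ((a' :: A') ++ (b :: B)) := by
          rfl
      _ = a :: (a.1 + a'.1, a.2 + a'.2) ::
            ((insertMediants ((a' :: A') ++ [b])).dropLast ++ insertMediants (b :: B)) := by
          rw [ih]
      _ = (a :: (a.1 + a'.1, a.2 + a'.2) :: insertMediants ((a' :: A') ++ [b])).dropLast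
            ++ insertMediants (b :: B) := by
          rw [List.dropLast_cons_of_ne_nil (by simp), List.dropLast_cons_of_ne_nil hne]
          simp
      _ = (insertMediants ((a :: a' :: A') ++ [b])).dropLast ++ insertMediants (b :: B) := rfl

private lemma insertMediants_length : ∀ l : List (ℕ × ℕ), l ≠ [] →
    (insertMediants l).length = 2 * l.length - 1
  | [x], _ => rfl
  | x :: y :: t, _ => by
    have := insertMediants_length (y :: t) (by simp)
    simp [insertMediants] at this ⊢
    omega

private lemma sbSeq_head : ∀ n, ∃ t, sbSeq n = (0,1) :: t
  | 0 => ⟨[(1,0)], rfl⟩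
  | n + 1 => by
    obtain ⟨t, ht⟩ := sbSeq_head n
    cases t with
    | nil => exact ⟨[], by simp [sbSeq, ht, insertMediants]⟩
    | cons y t' =>
      exact ⟨(0 + y.1, 1 + y.2) :: insertMediants (y :: t'),
        by simp only [sbSeq, ht, insertMediants]⟩

private lemma sbSeq_decomp : ∀ n, ∃ L : List (ℕ × ℕ),
    sbSeq (n + 1) = L ++ (sbSeq n).map sbF ∧ L.length = 2 ^ n
  | 0 => ⟨[(0,1)], by decide, rfl⟩
  | n + 1 => by
    obtain ⟨L, hL, hlen⟩ := sbSeq_decomp n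
    obtain ⟨t, ht⟩ := sbSeq_head n
    have hmap : (sbSeq n).map sbF = (1,1) :: t.map sbF := by simp [ht, sbF]
    refine ⟨(insertMediants (L ++ [(1,1)])).dropLast, ?_, ?_⟩
    · have h1 : sbSeq (n + 2) = insertMediants (L ++ (1,1) :: t.map sbF) := by
        rw [show sbSeq (n+2) = insertMediants (sbSeq (n+1)) from rfl, hL, hmap]
      rw [h1, insertMediants_append]
      congr 1
      rw [show ((1,1) : ℕ × ℕ) :: t.map sbF = ((0,1) :: t).map sbF by simp [sbF],
        insertMediants_map, ← ht]
      rfl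
    · rw [List.length_dropLast, insertMediants_length _ (by cases L <;> simp [insertMediants])]
      simp [hlen, pow_succ]
      omega

private lemma oddEntries_append : ∀ (A B : List (ℕ × ℕ)), A.length % 2 = 0 →
    oddEntries (A ++ B) = oddEntries A ++ oddEntries B
  | [], B, _ => rfl
  | [a], B, h => by simp at h
  | a :: a' :: A', B, h => by
    have h' : A'.length % 2 = 0 := by simp at h; omega
    have := oddEntries_append A' B h'
    simp [oddEntries, this]

private lemma oddEntries_map : ∀ l : List (ℕ × ℕ),
    oddEntries (l.map sbF) = (oddEntries l).map sbF
  | [] => rfl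
  | [x] => rfl
  | x :: y :: t => by simp [oddEntries, oddEntries_map t]

/-- If `a/b` is the `k`-th entry from the right (0-indexed) of the `n`-th row of the
Stern–Brocot tree, with `n > 1`, then the `k`-th entry from the right of the
`(n+1)`-th row is `(a+b)/b`. -/
theorem sternBrocot_right_child (n k : ℕ) (hn : 1 < n) (a b : ℕ)
    (h : (sbRow n).reverse[k]? = some (a, b)) :
    (sbRow (n + 1)).reverse[k]? = some (a + b, b) := by
  obtain ⟨L, hL, hlen⟩ := sbSeq_decomp n
  have heven : L.length % 2 = 0 := by
    obtain ⟨m, rfl⟩ : ∃ m, n = m + 2 := ⟨n - 2, by omega⟩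
    rw [hlen, pow_succ]; omega
  have hrow : sbRow (n + 1) = oddEntries L ++ (sbRow n).map sbF := by
    rw [sbRow, hL, oddEntries_append _ _ heven, oddEntries_map]; rfl
  have hk : k < (sbRow n).length := by
    have := List.getElem?_eq_some_iff.mp h
    simpa using this.1
  rw [hrow, List.reverse_append, List.getElem?_append_left (by simpa using hk),
    ← List.map_reverse, List.getElem?_map, h]
  rfl
end
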